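/- For the terms t̃(n) defined by t̃(0) := 0 and t̃(n+1) := S(SS0 × t̃(n)), the number of subterms of t̃(n) up to equality (subterms-qua-type) is at most 2n + 3. -/

import Mathlib

/-- Terms of the arithmetical language {0, S, +, ×}. -/
inductive ATerm where
  | zero : ATerm
  | succ : ATerm → ATerm
  | add : ATerm → ATerm → ATerm
  | mul : ATerm → ATerm → ATerm
deriving DecidableEq

/-- The set of subterms of a term: the term itself together with the subterms of its
immediate constituents. -/
def ATerm.subterms : ATerm → Finset ATerm
  | .zero => {.zero}
  | .succ t => insert (.succ t) t.subterms
  | .add s t => insert (.add s t) (s.subterms ∪ t.subterms)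
  | .mul s t => insert (.mul s t) (s.subterms ∪ t.subterms)

/-- The terms t̃(0) := 0 and t̃(n+1) := S(SS0 × t̃(n)). -/
def tilde : ℕ → ATerm
  | 0 => .zero
  | n + 1 => .succ (.mul (.succ (.succ .zero)) (tilde n))

/-! Passing from t̃(n+1) to t̃(n+2) adds at most the two terms SS0 × t̃(n+1) and
S(SS0 × t̃(n+1)): every subterm of SS0 already occurs in t̃(n+1). -/

namespace ATerm

theorem subterms_subset_of_mem {s t : ATerm} (h : s ∈ t.subterms) :
    s.subterms ⊆ t.subterms := by
  induction t with
  | zero => simp_all [subterms]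
  | succ t ih =>
    rcases Finset.mem_insert.mp h with rfl | h
    · exact subset_rfl
    · exact (ih h).trans (Finset.subset_insert _ _)
  | add t₁ t₂ ih₁ ih₂ | mul t₁ t₂ ih₁ ih₂ =>
    rcases Finset.mem_insert.mp h with rfl | h
    · exact subset_rfl
    refine Finset.Subset.trans ?_ (Finset.subset_insert _ _)
    rcases Finset.mem_union.mp h with h | h
    · exact (ih₁ h).trans Finset.subset_union_left
    · exact (ih₂ h).trans Finset.subset_union_right

theorem card_subterms_succ_mul_le {s t : ATerm} (h : s ∈ t.subterms) :
    (succ (mul s t)).subterms.card ≤ t.subterms.card + 2 := by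
  have hst : s.subterms ∪ t.subterms = t.subterms :=
    Finset.union_eq_right.mpr (subterms_subset_of_mem h)
  calc (succ (mul s t)).subterms.card
      = (insert (succ (mul s t)) (insert (mul s t) t.subterms)).card := by
        rw [subterms, subterms, hst]
    _ ≤ (insert (mul s t) t.subterms).card + 1 := Finset.card_insert_le _ _
    _ ≤ t.subterms.card + 2 := by grw [Finset.card_insert_le]

end ATerm

theorem succ_succ_zero_mem_subterms_tilde_succ (n : ℕ) :
    ATerm.succ (.succ .zero) ∈ (tilde (n + 1)).subterms := by
  simp [tilde, ATerm.subterms]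

/-- The number of subterms-qua-type of t̃(n) is at most 2n + 3. -/
theorem subterms_tilde_card_le (n : ℕ) : (tilde n).subterms.card ≤ 2 * n + 3 :=
  match n with
  | 0 => by decide
  | 1 => by decide
  | n + 2 => by
    have := ATerm.card_subterms_succ_mul_le (succ_succ_zero_mem_subterms_tilde_succ n)
    have := subterms_tilde_card_le (n + 1)
    rw [tilde]
    omega
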